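/- Let p minimize the quadratic model m(p) = ½‖r + Jp‖² subject to ‖p‖ ≤ Δ, where Jᵀr ≠ 0 and Δ ≤ (1−q)‖Jᵀr‖/‖JᵀJ‖ for some q ∈ (0,1). Then ‖r + J p‖ ≥ q‖r‖. -/

import Mathlib

open Matrix Finset

noncomputable def eucNorm {n : ℕ} (v : Fin n → ℝ) : ℝ := Real.sqrt (∑ i, v i ^ 2)

noncomputable def specNorm {n : ℕ} (A : Matrix (Fin n) (Fin n) ℝ) : ℝ :=
  sSup ((fun v => eucNorm (A.mulVec v)) '' {v | eucNorm v ≤ 1})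

noncomputable def pstep {n : ℕ} (J : Matrix (Fin n) (Fin n) ℝ) (r : Fin n → ℝ) (lam : ℝ) :
    Fin n → ℝ :=
  -((Jᵀ * J + lam • (1 : Matrix (Fin n) (Fin n) ℝ))⁻¹.mulVec (Jᵀ.mulVec r))

lemma sum_sq_nonneg' {n : ℕ} (v : Fin n → ℝ) : 0 ≤ ∑ i, v i ^ 2 :=
  Finset.sum_nonneg fun i _ => sq_nonneg _

lemma eucNorm_nonneg' {n : ℕ} (v : Fin n → ℝ) : 0 ≤ eucNorm v := Real.sqrt_nonneg _

lemma eucNorm_sq' {n : ℕ} (v : Fin n → ℝ) : eucNorm v ^ 2 = ∑ i, v i ^ 2 :=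
  Real.sq_sqrt (sum_sq_nonneg' v)

lemma eucNorm_zero' {n : ℕ} : eucNorm (0 : Fin n → ℝ) = 0 := by simp [eucNorm]

lemma eucNorm_eq_zero' {n : ℕ} {v : Fin n → ℝ} (h : eucNorm v = 0) : v = 0 := by
  have h2 : ∑ i, v i ^ 2 = 0 := by
    have h3 := eucNorm_sq' v; rw [h] at h3; simpa using h3.symm
  funext i
  have h4 := (Finset.sum_eq_zero_iff_of_nonneg (fun i _ => sq_nonneg (v i))).1 h2 i (mem_univ i)
  exact pow_eq_zero_iff (by norm_num) |>.1 h4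

lemma dot_le' {n : ℕ} (u v : Fin n → ℝ) : u ⬝ᵥ v ≤ eucNorm u * eucNorm v := by
  have h := Finset.sum_mul_sq_le_sq_mul_sq Finset.univ u v
  calc u ⬝ᵥ v ≤ |u ⬝ᵥ v| := le_abs_self _
    _ = Real.sqrt ((u ⬝ᵥ v) ^ 2) := (Real.sqrt_sq_eq_abs _).symm
    _ ≤ Real.sqrt ((∑ i, u i ^ 2) * (∑ i, v i ^ 2)) := Real.sqrt_le_sqrt h
    _ = eucNorm u * eucNorm v := by
        rw [Real.sqrt_mul (sum_sq_nonneg' u)]; rfl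

lemma eucNorm_smul' {n : ℕ} (c : ℝ) (v : Fin n → ℝ) : eucNorm (c • v) = |c| * eucNorm v := by
  simp only [eucNorm, Pi.smul_apply, smul_eq_mul, mul_pow, ← Finset.mul_sum]
  rw [Real.sqrt_mul (sq_nonneg c), Real.sqrt_sq_eq_abs]

lemma eucNorm_sub_le' {n : ℕ} (a b : Fin n → ℝ) : eucNorm (a - b) ≤ eucNorm a + eucNorm b := by
  have hdot : (-a) ⬝ᵥ b ≤ eucNorm a * eucNorm b := by
    have h := dot_le' (-a) b
    have hn : eucNorm (-a) = eucNorm a := by simp [eucNorm]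
    rwa [hn] at h
  have hdot' : -(∑ i, a i * b i) ≤ eucNorm a * eucNorm b := by
    simpa [dotProduct, Finset.sum_neg_distrib] using hdot
  have h1 : ∑ i, (a i - b i) ^ 2
      = (∑ i, a i ^ 2) - 2 * (∑ i, a i * b i) + ∑ i, b i ^ 2 := by
    rw [Finset.mul_sum, ← Finset.sum_sub_distrib, ← Finset.sum_add_distrib]
    congr 1; funext i; ring
  have key : ∑ i, (a i - b i) ^ 2 ≤ (eucNorm a + eucNorm b) ^ 2 := by
    have ha := eucNorm_sq' a
    have hb := eucNorm_sq' b
    nlinarith [eucNorm_nonneg' a, eucNorm_nonneg' b]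
  calc eucNorm (a - b) = Real.sqrt (∑ i, (a i - b i) ^ 2) := by rfl
    _ ≤ Real.sqrt ((eucNorm a + eucNorm b) ^ 2) := Real.sqrt_le_sqrt key
    _ = eucNorm a + eucNorm b := by
        rw [Real.sqrt_sq (add_nonneg (eucNorm_nonneg' a) (eucNorm_nonneg' b))]

lemma eucNorm_mulVec_le_frob' {n : ℕ} (A : Matrix (Fin n) (Fin n) ℝ) (v : Fin n → ℝ) :
    eucNorm (A.mulVec v) ≤ Real.sqrt (∑ i, ∑ j, A i j ^ 2) * eucNorm v := by
  have h : ∑ i, (A.mulVec v i) ^ 2 ≤ (∑ i, ∑ j, A i j ^ 2) * (∑ j, v j ^ 2) := by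
    rw [Finset.sum_mul]
    apply Finset.sum_le_sum
    intro i _
    simpa [Matrix.mulVec, dotProduct] using
      Finset.sum_mul_sq_le_sq_mul_sq Finset.univ (A i) v
  calc eucNorm (A.mulVec v) = Real.sqrt (∑ i, (A.mulVec v i) ^ 2) := rfl
    _ ≤ Real.sqrt ((∑ i, ∑ j, A i j ^ 2) * (∑ j, v j ^ 2)) := Real.sqrt_le_sqrt h
    _ = Real.sqrt (∑ i, ∑ j, A i j ^ 2) * eucNorm v := by
        rw [Real.sqrt_mul (by positivity)]; rfl

lemma specNorm_bddAbove' {n : ℕ} (A : Matrix (Fin n) (Fin n) ℝ) :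
    BddAbove ((fun v => eucNorm (A.mulVec v)) '' {v | eucNorm v ≤ 1}) := by
  refine ⟨Real.sqrt (∑ i, ∑ j, A i j ^ 2), ?_⟩
  rintro x ⟨v, hv, rfl⟩
  calc eucNorm (A.mulVec v) ≤ Real.sqrt (∑ i, ∑ j, A i j ^ 2) * eucNorm v :=
        eucNorm_mulVec_le_frob' A v
    _ ≤ Real.sqrt (∑ i, ∑ j, A i j ^ 2) * 1 := by
        exact mul_le_mul_of_nonneg_left hv (Real.sqrt_nonneg _)
    _ = Real.sqrt (∑ i, ∑ j, A i j ^ 2) := mul_one _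

lemma specNorm_nonneg' {n : ℕ} (A : Matrix (Fin n) (Fin n) ℝ) : 0 ≤ specNorm A := by
  have h0 : (0 : ℝ) ∈ (fun v => eucNorm (A.mulVec v)) '' {v | eucNorm v ≤ 1} := by
    refine ⟨0, by simp [Set.mem_setOf_eq, eucNorm_zero'], by simp [eucNorm_zero']⟩
  exact le_csSup (specNorm_bddAbove' A) h0

lemma eucNorm_mulVec_le_spec' {n : ℕ} (A : Matrix (Fin n) (Fin n) ℝ) (v : Fin n → ℝ) :
    eucNorm (A.mulVec v) ≤ specNorm A * eucNorm v := by
  rcases eq_or_ne (eucNorm v) 0 with h0 | h0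
  · have hv0 : v = 0 := eucNorm_eq_zero' h0
    simp [hv0, eucNorm_zero']
  · have hpos : 0 < eucNorm v := lt_of_le_of_ne (eucNorm_nonneg' v) (Ne.symm h0)
    set u := (eucNorm v)⁻¹ • v with hu
    have hun : eucNorm u = 1 := by
      rw [hu, eucNorm_smul', abs_of_nonneg (by positivity)]
      field_simp
    have hmem : eucNorm (A.mulVec u) ∈ (fun v => eucNorm (A.mulVec v)) '' {v | eucNorm v ≤ 1} :=
      ⟨u, by simp [Set.mem_setOf_eq, hun], rfl⟩
    have hle : eucNorm (A.mulVec u) ≤ specNorm A := le_csSup (specNorm_bddAbove' A) hmem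
    have hvu : v = eucNorm v • u := by
      rw [hu, smul_smul, mul_inv_cancel₀ h0, one_smul]
    calc eucNorm (A.mulVec v) = eucNorm (A.mulVec (eucNorm v • u)) := by rw [← hvu]
      _ = eucNorm (eucNorm v • A.mulVec u) := by rw [Matrix.mulVec_smul]
      _ = eucNorm v * eucNorm (A.mulVec u) := by
          rw [eucNorm_smul', abs_of_nonneg (eucNorm_nonneg' v)]
      _ ≤ eucNorm v * specNorm A := mul_le_mul_of_nonneg_left hle (eucNorm_nonneg' v)
      _ = specNorm A * eucNorm v := mul_comm _ _

theorem stmt_13 {n : ℕ} (J : Matrix (Fin n) (Fin n) ℝ) (r : Fin n → ℝ)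
    (hg : Jᵀ.mulVec r ≠ 0)
    (q : ℝ) (hq : q ∈ Set.Ioo (0 : ℝ) 1)
    (Δ : ℝ) (hΔ : Δ ≤ (1 - q) * eucNorm (Jᵀ.mulVec r) / specNorm (Jᵀ * J))
    (p : Fin n → ℝ) (hfeas : eucNorm p ≤ Δ)
    (hmin : ∀ p' : Fin n → ℝ, eucNorm p' ≤ Δ →
      (1 / 2) * eucNorm (r + J.mulVec p) ^ 2 ≤ (1 / 2) * eucNorm (r + J.mulVec p') ^ 2) :
    eucNorm (r + J.mulVec p) ≥ q * eucNorm r := by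
  obtain ⟨hq0, hq1⟩ := hq
  set g := Jᵀ.mulVec r with hgdef
  set s := specNorm (Jᵀ * J) with hsdef
  have hs0 : 0 ≤ s := specNorm_nonneg' _
  -- key bound: eucNorm (J v) ≤ √s * eucNorm v
  have hJv : ∀ v : Fin n → ℝ, eucNorm (J.mulVec v) ≤ Real.sqrt s * eucNorm v := by
    intro v
    have hdot : eucNorm (J.mulVec v) ^ 2 = (Jᵀ * J).mulVec v ⬝ᵥ v := by
      rw [eucNorm_sq']
      have h1 : J.mulVec v ⬝ᵥ J.mulVec v = ∑ i, (J.mulVec v i) ^ 2 := by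
        simp [dotProduct, sq]
      rw [← h1, Matrix.dotProduct_mulVec, ← Matrix.mulVec_transpose,
        ← Matrix.mulVec_mulVec]
    have h2 : (Jᵀ * J).mulVec v ⬝ᵥ v ≤ s * eucNorm v * eucNorm v := by
      calc (Jᵀ * J).mulVec v ⬝ᵥ v ≤ eucNorm ((Jᵀ * J).mulVec v) * eucNorm v := dot_le' _ _
        _ ≤ s * eucNorm v * eucNorm v := by
            have := eucNorm_mulVec_le_spec' (Jᵀ * J) v
            exact mul_le_mul_of_nonneg_right this (eucNorm_nonneg' v)
    have hsq : eucNorm (J.mulVec v) ^ 2 ≤ (Real.sqrt s * eucNorm v) ^ 2 := by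
      rw [hdot, mul_pow, Real.sq_sqrt hs0]
      nlinarith [h2]
    have h3 := Real.sqrt_le_sqrt hsq
    rwa [Real.sqrt_sq (eucNorm_nonneg' _), Real.sqrt_sq (mul_nonneg (Real.sqrt_nonneg _) (eucNorm_nonneg' v))] at h3
  -- eucNorm g ≤ eucNorm r * √s
  have hgpos : 0 < eucNorm g := by
    rcases lt_or_eq_of_le (eucNorm_nonneg' g) with h | h
    · exact h
    · exact absurd (eucNorm_eq_zero' h.symm) hg
  have hg_le : eucNorm g ≤ eucNorm r * Real.sqrt s := by
    have h1 : eucNorm g ^ 2 = r ⬝ᵥ J.mulVec g := by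
      rw [eucNorm_sq']
      have h2 : g ⬝ᵥ g = ∑ i, g i ^ 2 := by simp [dotProduct, sq]
      rw [← h2]
      have h3 : g = r ᵥ* J := by rw [hgdef, Matrix.mulVec_transpose]
      conv_lhs => rw [h3]
      rw [← Matrix.dotProduct_mulVec, ← h3]
    have h3 : r ⬝ᵥ J.mulVec g ≤ eucNorm r * (Real.sqrt s * eucNorm g) :=
      le_trans (dot_le' _ _) (mul_le_mul_of_nonneg_left (hJv g) (eucNorm_nonneg' r))
    have h4 : eucNorm g * eucNorm g ≤ eucNorm r * Real.sqrt s * eucNorm g := by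
      have := h1 ▸ h3
      nlinarith [this]
    exact le_of_mul_le_mul_right (by linarith [h4]) hgpos
  -- eucNorm (J p) ≤ (1 - q) * eucNorm r
  have hJp : eucNorm (J.mulVec p) ≤ (1 - q) * eucNorm r := by
    rcases eq_or_lt_of_le hs0 with hs | hs
    · have h1 := hJv p
      rw [← hs, Real.sqrt_zero, zero_mul] at h1
      have h2 : 0 ≤ (1 - q) * eucNorm r := by
        have := eucNorm_nonneg' r; nlinarith
      linarith
    · have hsqrt : 0 < Real.sqrt s := Real.sqrt_pos.2 hs
      have hchain : eucNorm (J.mulVec p) ≤ Real.sqrt s * ((1 - q) * eucNorm g / s) := by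
        calc eucNorm (J.mulVec p) ≤ Real.sqrt s * eucNorm p := hJv p
          _ ≤ Real.sqrt s * Δ := mul_le_mul_of_nonneg_left hfeas hsqrt.le
          _ ≤ Real.sqrt s * ((1 - q) * eucNorm g / s) :=
              mul_le_mul_of_nonneg_left hΔ hsqrt.le
      have heq : Real.sqrt s * ((1 - q) * eucNorm g / s) = (1 - q) * eucNorm g / Real.sqrt s := by
        have hts : Real.sqrt s * Real.sqrt s = s := Real.mul_self_sqrt hs0
        field_simp
        linear_combination hts
      have hlast : (1 - q) * eucNorm g / Real.sqrt s ≤ (1 - q) * eucNorm r := by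
        rw [div_le_iff₀ hsqrt]
        have h5 : (1 - q) * eucNorm g ≤ (1 - q) * (eucNorm r * Real.sqrt s) :=
          mul_le_mul_of_nonneg_left hg_le (by linarith)
        linarith [h5]
      rw [heq] at hchain
      linarith
  -- triangle inequality
  have htri : eucNorm r ≤ eucNorm (r + J.mulVec p) + eucNorm (J.mulVec p) := by
    have h := eucNorm_sub_le' (r + J.mulVec p) (J.mulVec p)
    have heq : (r + J.mulVec p) - J.mulVec p = r := by abel
    rwa [heq] at h
  linarith
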